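/- Let (B, D_B, ev), (C, D_C, ev), (D, D_D, ev) be categories with duality, let F, G : C → D and F', G' : B → C be functors, and let α : F ∘ D_C → D_D ∘ Gᵒᵖ and α' : F' ∘ D_B → D_C ∘ G'ᵒᵖ be natural transformations. Define their composite αα' : F ∘ F' ∘ D_B → D_D ∘ (G ∘ G')ᵒᵖ as F applied to α' followed by α whiskered with G'ᵒᵖ. Then (αα')^T = α^T α'^T. -/

import Mathlib

open CategoryTheory Opposite

/-- A category with duality: a functor `D : Cᵒᵖ ⥤ C` together with an evaluation
natural transformation `ev : 𝟭 C ⟶ D.rightOp ⋙ D` such that the composite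
`D A → D D D A → D A` (namely `ev_{D A}` followed by `D (ev_A)`) is the identity. -/
structure CatWithDuality (C : Type*) [Category C] where
  D : Cᵒᵖ ⥤ C
  ev : 𝟭 C ⟶ D.rightOp ⋙ D
  ev_comp : ∀ A : C, ev.app (D.obj (op A)) ≫ D.map (ev.app A).op = 𝟙 (D.obj (op A))

/-- The transpose `g^T : A ⟶ D B` of a morphism `g : B ⟶ D A`, namely
`ev_A` followed by `D g`. -/
def CatWithDuality.transpose {C : Type*} [Category C] (S : CatWithDuality C)
    {A B : C} (g : B ⟶ S.D.obj (op A)) : A ⟶ S.D.obj (op B) :=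
  S.ev.app A ≫ S.D.map g.op

/-- The transpose `β^T : F ∘ D_C ⟶ D_D ∘ Gᵒᵖ` of a natural transformation
`β : G ∘ D_C ⟶ D_D ∘ Fᵒᵖ`; its component at `A` is
`ev_{F (D_C A)}` followed by `D_D (β_{D_C A})` followed by `D_D (G (ev_A))`. -/
def natTranspose {C : Type*} [Category C] {D : Type*} [Category D]
    (SC : CatWithDuality C) (SD : CatWithDuality D)
    {F G : C ⥤ D} (β : SC.D ⋙ G ⟶ F.op ⋙ SD.D) :
    SC.D ⋙ F ⟶ G.op ⋙ SD.D where
  app X := SD.ev.app (F.obj (SC.D.obj X)) ≫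
    SD.D.map (β.app (op (SC.D.obj X))).op ≫
    SD.D.map (G.map (SC.ev.app X.unop)).op
  naturality := by
    intro X Y f
    dsimp
    have h1 := SD.ev.naturality (F.map (SC.D.map f))
    dsimp at h1
    rw [reassoc_of% h1]
    simp only [Functor.rightOp_map, ← Functor.map_comp, ← op_comp, Category.assoc]
    congr 2
    congr 1
    have h3 := β.naturality ((SC.D.map f).op)
    dsimp at h3
    rw [← h3]
    have h4 := SC.ev.naturality f.unop
    dsimp at h4
    rw [← Category.assoc, ← Functor.map_comp, ← h4, Functor.map_comp, Category.assoc]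

/-- The composite `αα' : F ∘ F' ∘ D_B ⟶ D_D ∘ (G ∘ G')ᵒᵖ` of form transformations
`α : F ∘ D_C ⟶ D_D ∘ Gᵒᵖ` and `α' : F' ∘ D_B ⟶ D_C ∘ G'ᵒᵖ`, given by `F` applied
to `α'` followed by `α` whiskered with `G'ᵒᵖ`. -/
def natCompose {B : Type*} [Category B] {C : Type*} [Category C] {D : Type*} [Category D]
    (SB : CatWithDuality B) (SC : CatWithDuality C) (SD : CatWithDuality D)
    {F G : C ⥤ D} {F' G' : B ⥤ C}
    (α : SC.D ⋙ F ⟶ G.op ⋙ SD.D) (α' : SB.D ⋙ F' ⟶ G'.op ⋙ SC.D) :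
    SB.D ⋙ (F' ⋙ F) ⟶ (G' ⋙ G).op ⋙ SD.D :=
  Functor.whiskerRight α' F ≫ Functor.whiskerLeft G'.op α

/-!
Transposition `g ↦ g^T = ev_A ≫ D(g)` of morphisms `g : B ⟶ D A` is an involution, by naturality
of `ev` and the triangle identity `ev_{D A} ≫ D(ev_A) = 𝟙`, and `(α^T)_X` is the transpose of
`G(ev_X) ≫ α_{D X}`. Naturality of `α` then gives `G(k^T) ≫ (α^T)_B = (F(k) ≫ α_A)^T` for every
`k : B ⟶ D_C A`; applied to `k = F'(ev_X) ≫ α'_{D X}`, whose transpose is `(α'^T)_X`, this is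
the component at `X` of `(αα')^T = α^T α'^T`.
-/

namespace CatWithDuality

variable {C : Type*} [Category C] (S : CatWithDuality C)

theorem transpose_transpose {A B : C} (g : B ⟶ S.D.obj (op A)) :
    S.transpose (S.transpose g) = g := by
  have hev := S.ev.naturality g
  dsimp at hev
  simp only [transpose, op_comp, Functor.map_comp]
  rw [← reassoc_of% hev, S.ev_comp, Category.comp_id]

theorem comp_transpose {A A' B : C} (h : A' ⟶ A) (g : B ⟶ S.D.obj (op A)) :
    h ≫ S.transpose g = S.transpose (g ≫ S.D.map h.op) := by
  have hev := S.ev.naturality h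
  dsimp at hev
  simp only [transpose, reassoc_of% hev, op_comp, Functor.map_comp]

end CatWithDuality

section

variable {C : Type*} [Category C] {D : Type*} [Category D]
  (SC : CatWithDuality C) (SD : CatWithDuality D)

theorem natTranspose_app {F G : C ⥤ D} (β : SC.D ⋙ G ⟶ F.op ⋙ SD.D) (X : Cᵒᵖ) :
    (natTranspose SC SD β).app X =
      SD.transpose (G.map (SC.ev.app X.unop) ≫ β.app (op (SC.D.obj X))) := by
  simp [natTranspose, CatWithDuality.transpose]

theorem map_transpose_comp_natTranspose_app {F G : C ⥤ D} (α : SC.D ⋙ F ⟶ G.op ⋙ SD.D)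
    {A B : C} (g : B ⟶ SC.D.obj (op A)) :
    G.map (SC.transpose g) ≫ (natTranspose SC SD α).app (op B) =
      SD.transpose (F.map g ≫ α.app (op A)) := by
  have hα := α.naturality (SC.transpose g).op
  dsimp at hα
  rw [natTranspose_app, CatWithDuality.comp_transpose, Category.assoc, ← hα,
    ← F.map_comp_assoc]
  exact congrArg (fun k => SD.transpose (F.map k ≫ α.app (op A))) (SC.transpose_transpose g)

end

/-- Transposition is compatible with composition of form transformations:
`(αα')^T = α^T α'^T`. -/
theorem natTranspose_natCompose
    {B : Type*} [Category B] {C : Type*} [Category C] {D : Type*} [Category D]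
    (SB : CatWithDuality B) (SC : CatWithDuality C) (SD : CatWithDuality D)
    (F G : C ⥤ D) (F' G' : B ⥤ C)
    (α : SC.D ⋙ F ⟶ G.op ⋙ SD.D) (α' : SB.D ⋙ F' ⟶ G'.op ⋙ SC.D) :
    natTranspose SB SD (natCompose SB SC SD α α') =
      natCompose SB SC SD (natTranspose SC SD α) (natTranspose SB SC α') := by
  ext X
  simp only [natCompose, NatTrans.comp_app, Functor.whiskerRight_app, Functor.whiskerLeft_app,
    Functor.op_obj, Functor.comp_map, natTranspose_app SB SC α', natTranspose_app SB SD]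
  rw [← F.map_comp_assoc]
  exact (map_transpose_comp_natTranspose_app SC SD α _).symm
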